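/- arXiv:2306.04848 — 10 statements merged into one kernel-verified Lean document; each statement's English description precedes it below -/
import Mathlib

section
/- Let K ⊆ ℝⁿ be closed and nonempty. Let ε_θ : ℝⁿ × ℝ_{>0} → ℝⁿ be a (0,1)-approximate projection, meaning: for every x ∈ ℝⁿ having a unique projection p onto K and every σ > 0 with dist_K(x) = √n·σ, one has x − σ·ε_θ(x, σ) = p. Let 0 < σ₀ < σ₁ < … < σ_N, let x_N ∈ ℝⁿ satisfy dist_K(x_N) = √n·σ_N, and define the DDIM iterates x_{t−1} = x_t + (σ_{t−1} − σ_t)·ε_θ(x_t, σ_t) for t = N, N−1, …, 1. Assume each x_t for t = N, …, 1 has a unique projection p_t onto K. Then for every t ∈ {0, 1, …, N}, dist_K(x_t) = √n·σ_t, and for every t ∈ {1, …, N}, x_{t−1} = x_t − β_t·(x_t − p_t) where β_t = 1 − σ_{t−1}/σ_t. -/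
/-! With an exact denoiser, `σ_t • ε_θ(x_t, σ_t) = x_t - p_t`, so a DDIM step moves `x_t` towards its
nearest point `p_t` by the fraction `β_t = 1 - σ_{t-1}/σ_t` of the way. Along the segment from `x_t`
to `p_t` the point `p_t` stays nearest, so the distance to `K` shrinks by the factor `σ_{t-1}/σ_t`
and the invariant `dist_K(x_t) = √n·σ_t` propagates downwards from `t = N`. -/

open Metric

lemma Metric.infDist_sub_smul_sub_of_dist_eq_infDist {E : Type*} [NormedAddCommGroup E]
    [NormedSpace ℝ E] {K : Set E} {x p : E} (hp : p ∈ K) (hxp : dist x p = infDist x K)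
    {c : ℝ} (hc₀ : 0 ≤ c) (hc₁ : c ≤ 1) :
    infDist (x - c • (x - p)) K = (1 - c) * infDist x K := by
  set y := x - c • (x - p)
  have hyp : dist y p = (1 - c) * infDist x K := by
    rw [dist_eq_norm, show y - p = (1 - c) • (x - p) by simp only [y, sub_smul, one_smul]; abel,
      norm_smul, Real.norm_of_nonneg (sub_nonneg.2 hc₁), ← dist_eq_norm, hxp]
  have hxy : dist x y = c * infDist x K := by
    rw [dist_eq_norm, show x - y = c • (x - p) by simp only [y]; abel, norm_smul,
      Real.norm_of_nonneg hc₀, ← dist_eq_norm, hxp]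
  have hupper : infDist y K ≤ (1 - c) * infDist x K := hyp ▸ infDist_le_dist_of_mem hp
  have hlower : infDist x K ≤ infDist y K + c * infDist x K := hxy ▸ infDist_le_infDist_add_dist
  linarith

lemma add_sub_smul_eq_sub_smul_sub_of_sub_smul_eq {E : Type*} [AddCommGroup E] [Module ℝ E]
    {x p e : E} {s s' : ℝ} (hs : s ≠ 0) (he : x - s • e = p) :
    x + (s' - s) • e = x - (1 - s' / s) • (x - p) := by
  rw [← he, sub_sub_cancel, smul_smul, sub_mul, one_mul, div_mul_cancel₀ _ hs, ← neg_sub s s',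
    neg_smul, ← sub_eq_add_neg]

lemma pos_of_pos_of_lt_succ {σ : ℕ → ℝ} {N : ℕ} (h₀ : 0 < σ 0)
    (hσ : ∀ t, t < N → σ t < σ (t + 1)) : ∀ t, t ≤ N → 0 < σ t
  | 0, _ => h₀
  | t + 1, ht => (pos_of_pos_of_lt_succ h₀ hσ t (by omega)).trans (hσ t ht)

theorem stmt_6_general {n : ℕ} (K : Set (EuclideanSpace ℝ (Fin n)))
    (εθ : EuclideanSpace ℝ (Fin n) → ℝ → EuclideanSpace ℝ (Fin n))
    -- ε_θ is a (0,1)-approximate projection: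
    (hεθ : ∀ (y : EuclideanSpace ℝ (Fin n)) (s : ℝ), 0 < s →
      ∀ q : EuclideanSpace ℝ (Fin n),
        (q ∈ K ∧ dist y q = Metric.infDist y K ∧
          ∀ q' ∈ K, dist y q' = Metric.infDist y K → q' = q) →
        Metric.infDist y K = Real.sqrt n * s →
        y - s • εθ y s = q)
    (N : ℕ) (σ : ℕ → ℝ) (hσ0 : 0 < σ 0)
    (hσmono : ∀ t, t < N → σ t < σ (t + 1))
    (x : ℕ → EuclideanSpace ℝ (Fin n))
    (hinit : Metric.infDist (x N) K = Real.sqrt n * σ N)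
    (hiter : ∀ t, 1 ≤ t → t ≤ N →
      x (t - 1) = x t + (σ (t - 1) - σ t) • εθ (x t) (σ t))
    (p : ℕ → EuclideanSpace ℝ (Fin n))
    (hproj : ∀ t, 1 ≤ t → t ≤ N →
      p t ∈ K ∧ dist (x t) (p t) = Metric.infDist (x t) K ∧
        ∀ q' ∈ K, dist (x t) q' = Metric.infDist (x t) K → q' = p t) :
    (∀ t, t ≤ N → Metric.infDist (x t) K = Real.sqrt n * σ t) ∧
      (∀ t, 1 ≤ t → t ≤ N →
        x (t - 1) = x t - (1 - σ (t - 1) / σ t) • (x t - p t)) := by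
  have hpos := pos_of_pos_of_lt_succ hσ0 hσmono
  have hstep : ∀ t, 1 ≤ t → t ≤ N → infDist (x t) K = √n * σ t →
      x (t - 1) = x t - (1 - σ (t - 1) / σ t) • (x t - p t) := fun t h₁ hN hd =>
    (hiter t h₁ hN).trans <| add_sub_smul_eq_sub_smul_sub_of_sub_smul_eq (hpos t hN).ne' <|
      hεθ _ _ (hpos t hN) _ (hproj t h₁ hN) hd
  have hdist : ∀ t, t ≤ N → infDist (x t) K = √n * σ t := by
    intro t ht
    induction ht using Nat.decreasingInduction with
    | self => exact hinit
    | of_succ t ht ih =>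
      have hσt := hpos t ht.le
      have hσt' := hpos (t + 1) ht
      obtain ⟨hpK, hpd, -⟩ := hproj (t + 1) (by omega) ht
      have hx := hstep (t + 1) (by omega) ht ih
      rw [Nat.add_sub_cancel] at hx
      have hβ₀ : 0 ≤ 1 - σ t / σ (t + 1) := sub_nonneg.2 ((div_le_one hσt').2 (hσmono t ht).le)
      have hβ₁ : 1 - σ t / σ (t + 1) ≤ 1 := sub_le_self _ (div_pos hσt hσt').le
      rw [hx, infDist_sub_smul_sub_of_dist_eq_infDist hpK hpd hβ₀ hβ₁, ih]
      field_simp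
      ring
  exact ⟨hdist, fun t h₁ hN => hstep t h₁ hN (hdist t hN)⟩

/-- Under a `(0,1)`-approximate (i.e. exact) projection denoiser, the DDIM
iterates are exact gradient descent on `½·dist_K²` with step sizes `β_t = 1 − σ_{t−1}/σ_t`,
and `dist_K(x_t) = √n·σ_t` at every step. -/
theorem stmt_6 {n : ℕ} (K : Set (EuclideanSpace ℝ (Fin n))) (hKc : IsClosed K)
    (hKne : K.Nonempty)
    (εθ : EuclideanSpace ℝ (Fin n) → ℝ → EuclideanSpace ℝ (Fin n))
    -- ε_θ is a (0,1)-approximate projection: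
    (hεθ : ∀ (y : EuclideanSpace ℝ (Fin n)) (s : ℝ), 0 < s →
      ∀ q : EuclideanSpace ℝ (Fin n),
        (q ∈ K ∧ dist y q = Metric.infDist y K ∧
          ∀ q' ∈ K, dist y q' = Metric.infDist y K → q' = q) →
        Metric.infDist y K = Real.sqrt n * s →
        y - s • εθ y s = q)
    (N : ℕ) (σ : ℕ → ℝ) (hσ0 : 0 < σ 0)
    (hσmono : ∀ t, t < N → σ t < σ (t + 1))
    (x : ℕ → EuclideanSpace ℝ (Fin n))
    (hinit : Metric.infDist (x N) K = Real.sqrt n * σ N)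
    (hiter : ∀ t, 1 ≤ t → t ≤ N →
      x (t - 1) = x t + (σ (t - 1) - σ t) • εθ (x t) (σ t))
    (p : ℕ → EuclideanSpace ℝ (Fin n))
    (hproj : ∀ t, 1 ≤ t → t ≤ N →
      p t ∈ K ∧ dist (x t) (p t) = Metric.infDist (x t) K ∧
        ∀ q' ∈ K, dist (x t) q' = Metric.infDist (x t) K → q' = p t) :
    (∀ t, t ≤ N → Metric.infDist (x t) K = Real.sqrt n * σ t) ∧
      (∀ t, 1 ≤ t → t ≤ N →
        x (t - 1) = x t - (1 - σ (t - 1) / σ t) • (x t - p t)) :=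
  stmt_6_general K εθ hεθ N σ hσ0 hσmono x hinit hiter p hproj
end

section
/- Let K ⊆ ℝⁿ be a nonempty set, let x ∈ ℝⁿ have a projection p onto K, let η ≥ 0, 0 ≤ β ≤ 1, and let e ∈ ℝⁿ satisfy ‖e‖ ≤ η·dist_K(x). Define x₊ = x − β·((x − p) + e). Then (1 − β·(η + 1))·dist_K(x) ≤ dist_K(x₊) ≤ (1 + β·(η − 1))·dist_K(x). -/
/-- A single approximate gradient step on `½·dist_K²` with relative error
`‖e‖ ≤ η·dist_K(x)` satisfies
`(1 − β(η+1))·dist_K(x) ≤ dist_K(x₊) ≤ (1 + β(η−1))·dist_K(x)`. -/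
theorem stmt_7 {n : ℕ} (K : Set (EuclideanSpace ℝ (Fin n))) (hK : K.Nonempty)
    (x p : EuclideanSpace ℝ (Fin n)) (hpK : p ∈ K)
    (hp : dist x p = Metric.infDist x K)
    (η β : ℝ) (hη : 0 ≤ η) (hβ0 : 0 ≤ β) (hβ1 : β ≤ 1)
    (e : EuclideanSpace ℝ (Fin n)) (he : ‖e‖ ≤ η * Metric.infDist x K) :
    (1 - β * (η + 1)) * Metric.infDist x K
        ≤ Metric.infDist (x - β • ((x - p) + e)) K ∧
      Metric.infDist (x - β • ((x - p) + e)) K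
        ≤ (1 + β * (η - 1)) * Metric.infDist x K := by
  set d := Metric.infDist x K with hd
  have hd0 : 0 ≤ d := Metric.infDist_nonneg
  have hxp : ‖x - p‖ = d := by rw [← dist_eq_norm]; exact hp
  constructor
  · have h1 : d ≤ Metric.infDist (x - β • ((x - p) + e)) K + dist x (x - β • ((x - p) + e)) :=
      Metric.infDist_le_infDist_add_dist
    have h2 : dist x (x - β • ((x - p) + e)) ≤ β * (η + 1) * d := by
      rw [dist_eq_norm]
      have heq : x - (x - β • ((x - p) + e)) = β • ((x - p) + e) := by abel
      rw [heq, norm_smul, Real.norm_eq_abs, abs_of_nonneg hβ0]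
      calc β * ‖(x - p) + e‖ ≤ β * (‖x - p‖ + ‖e‖) :=
            mul_le_mul_of_nonneg_left (norm_add_le _ _) hβ0
        _ ≤ β * (d + η * d) :=
            mul_le_mul_of_nonneg_left (add_le_add (le_of_eq hxp) he) hβ0
        _ = β * (η + 1) * d := by ring
    linarith
  · have h1 : Metric.infDist (x - β • ((x - p) + e)) K ≤ dist (x - β • ((x - p) + e)) p :=
      Metric.infDist_le_dist_of_mem hpK
    have h2 : dist (x - β • ((x - p) + e)) p ≤ (1 + β * (η - 1)) * d := by
      rw [dist_eq_norm]
      have heq : x - β • ((x - p) + e) - p = (1 - β) • (x - p) + (-β) • e := by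
        simp [smul_add, sub_smul, one_smul, neg_smul]; abel
      rw [heq]
      calc ‖(1 - β) • (x - p) + (-β) • e‖ ≤ ‖(1 - β) • (x - p)‖ + ‖(-β) • e‖ :=
            norm_add_le _ _
        _ = (1 - β) * d + β * ‖e‖ := by
            rw [norm_smul, norm_smul, Real.norm_eq_abs, Real.norm_eq_abs,
              abs_of_nonneg (by linarith : (0:ℝ) ≤ 1 - β), abs_neg, abs_of_nonneg hβ0, hxp]
        _ ≤ (1 - β) * d + β * (η * d) := by nlinarith [he]
        _ = (1 + β * (η - 1)) * d := by ring
    linarith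
end

section
/- Let K ⊆ ℝⁿ be closed and nonempty, let η > 0 and ν ≥ 1, and let ε_θ : ℝⁿ × ℝ_{>0} → ℝⁿ be an (η, ν)-approximate projection. Let σ_N, …, σ_0 > 0 and β_N, …, β_1 ∈ [0, 1], let x_N ∈ ℝⁿ satisfy (1/ν)·dist_K(x_N) ≤ √n·σ_N ≤ ν·dist_K(x_N), and define x_{t−1} = x_t − β_t·σ_t·ε_θ(x_t, σ_t) for t = N, …, 1. Assume each x_t has a unique projection onto K, and that for every t ∈ {1, …, N}: (1/ν)·dist_K(x_N)·∏_{i=t}^{N} (1 + β_i·(η − 1)) ≤ √n·σ_{t−1} ≤ ν·dist_K(x_N)·∏_{i=t}^{N} (1 − β_i·(η + 1)). Then for every t ∈ {1, …, N}: (i) dist_K(x_N)·∏_{i=t}^{N} (1 − β_i·(η + 1)) ≤ dist_K(x_{t−1}) ≤ dist_K(x_N)·∏_{i=t}^{N} (1 + β_i·(η − 1)), and (ii) (1/ν)·dist_K(x_{t−1}) ≤ √n·σ_{t−1} ≤ ν·dist_K(x_{t−1}). -/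
/-- Approximate gradient descent driven by an `(η, ν)`-approximate projection
denoiser: if the noise schedule satisfies the admissibility-type sandwich condition, then
the distance bounds of the multi-step lemma hold, and `√n·σ_{t−1}` remains a `ν`-accurate
estimate of `dist_K(x_{t−1})` at every step. -/
theorem stmt_9 {n : ℕ} (K : Set (EuclideanSpace ℝ (Fin n))) (hKc : IsClosed K)
    (hKne : K.Nonempty)
    (η ν : ℝ) (hη : 0 < η) (hν : 1 ≤ ν)
    (εθ : EuclideanSpace ℝ (Fin n) → ℝ → EuclideanSpace ℝ (Fin n))
    -- ε_θ is an (η, ν)-approximate projection: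
    (hεθ : ∀ (y : EuclideanSpace ℝ (Fin n)) (s : ℝ), 0 < s →
      ∀ q : EuclideanSpace ℝ (Fin n),
        (q ∈ K ∧ dist y q = Metric.infDist y K ∧
          ∀ q' ∈ K, dist y q' = Metric.infDist y K → q' = q) →
        (1 / ν) * Metric.infDist y K ≤ Real.sqrt n * s →
        Real.sqrt n * s ≤ ν * Metric.infDist y K →
        ‖y - s • εθ y s - q‖ ≤ η * Metric.infDist y K)
    (N : ℕ) (σ : ℕ → ℝ) (β : ℕ → ℝ)
    (hσpos : ∀ t, t ≤ N → 0 < σ t)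
    (hβ : ∀ t, 1 ≤ t → t ≤ N → 0 ≤ β t ∧ β t ≤ 1)
    (x : ℕ → EuclideanSpace ℝ (Fin n))
    (hinit₁ : (1 / ν) * Metric.infDist (x N) K ≤ Real.sqrt n * σ N)
    (hinit₂ : Real.sqrt n * σ N ≤ ν * Metric.infDist (x N) K)
    (hiter : ∀ t, 1 ≤ t → t ≤ N →
      x (t - 1) = x t - (β t * σ t) • εθ (x t) (σ t))
    (p : ℕ → EuclideanSpace ℝ (Fin n))
    (hproj : ∀ t, t ≤ N →
      p t ∈ K ∧ dist (x t) (p t) = Metric.infDist (x t) K ∧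
        ∀ q' ∈ K, dist (x t) q' = Metric.infDist (x t) K → q' = p t)
    (hsched : ∀ t, 1 ≤ t → t ≤ N →
      (1 / ν) * Metric.infDist (x N) K * ∏ i ∈ Finset.Icc t N, (1 + β i * (η - 1))
          ≤ Real.sqrt n * σ (t - 1) ∧
        Real.sqrt n * σ (t - 1)
          ≤ ν * Metric.infDist (x N) K * ∏ i ∈ Finset.Icc t N, (1 - β i * (η + 1))) :
    ∀ t, 1 ≤ t → t ≤ N →
      (Metric.infDist (x N) K * ∏ i ∈ Finset.Icc t N, (1 - β i * (η + 1))
          ≤ Metric.infDist (x (t - 1)) K ∧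
        Metric.infDist (x (t - 1)) K
          ≤ Metric.infDist (x N) K * ∏ i ∈ Finset.Icc t N, (1 + β i * (η - 1))) ∧
      ((1 / ν) * Metric.infDist (x (t - 1)) K ≤ Real.sqrt n * σ (t - 1) ∧
        Real.sqrt n * σ (t - 1) ≤ ν * Metric.infDist (x (t - 1)) K) := by
  have hν0 : (0:ℝ) < ν := lt_of_lt_of_le one_pos hν
  have hνinv : (0:ℝ) ≤ 1 / ν := by positivity
  -- one-step lemma
  have hstep : ∀ s, 1 ≤ s → s ≤ N →
      (1 / ν) * Metric.infDist (x s) K ≤ Real.sqrt n * σ s →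
      Real.sqrt n * σ s ≤ ν * Metric.infDist (x s) K →
      (1 - β s * (η + 1)) * Metric.infDist (x s) K ≤ Metric.infDist (x (s - 1)) K ∧
        Metric.infDist (x (s - 1)) K ≤ (1 + β s * (η - 1)) * Metric.infDist (x s) K := by
    intro s hs1 hsN hacc1 hacc2
    obtain ⟨hβ0, hβ1⟩ := hβ s hs1 hsN
    obtain ⟨hpK, hpd, hpu⟩ := hproj s hsN
    have hσs := hσpos s hsN
    set d := Metric.infDist (x s) K with hd
    have hεb : ‖x s - σ s • εθ (x s) (σ s) - p s‖ ≤ η * d :=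
      hεθ (x s) (σ s) hσs (p s) ⟨hpK, hpd, hpu⟩ hacc1 hacc2
    have hd0 : 0 ≤ d := Metric.infDist_nonneg
    have hxp : ‖x s - p s‖ ≤ d := by rw [← dist_eq_norm]; exact le_of_eq hpd
    have hσε : ‖σ s • εθ (x s) (σ s)‖ ≤ (η + 1) * d := by
      have hsplit : σ s • εθ (x s) (σ s)
          = (x s - p s) - (x s - σ s • εθ (x s) (σ s) - p s) := by module
      rw [hsplit]
      calc ‖(x s - p s) - (x s - σ s • εθ (x s) (σ s) - p s)‖
          ≤ ‖x s - p s‖ + ‖x s - σ s • εθ (x s) (σ s) - p s‖ := norm_sub_le _ _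
        _ ≤ (η + 1) * d := by linarith
    have hrec := hiter s hs1 hsN
    constructor
    · have h1 : d ≤ Metric.infDist (x (s - 1)) K + dist (x s) (x (s - 1)) :=
        Metric.infDist_le_infDist_add_dist
      have h2 : dist (x s) (x (s - 1)) ≤ β s * ((η + 1) * d) := by
        rw [hrec, dist_eq_norm, sub_sub_cancel, mul_smul, norm_smul,
          Real.norm_of_nonneg hβ0]
        exact mul_le_mul_of_nonneg_left hσε hβ0
      nlinarith
    · have hmem : Metric.infDist (x (s - 1)) K ≤ dist (x (s - 1)) (p s) :=
        Metric.infDist_le_dist_of_mem hpK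
      have h3 : dist (x (s - 1)) (p s) ≤ (1 + β s * (η - 1)) * d := by
        rw [dist_eq_norm, hrec]
        have hkey : x s - (β s * σ s) • εθ (x s) (σ s) - p s
            = (1 - β s) • (x s - p s)
              + β s • (x s - σ s • εθ (x s) (σ s) - p s) := by module
        rw [hkey]
        calc ‖(1 - β s) • (x s - p s)
              + β s • (x s - σ s • εθ (x s) (σ s) - p s)‖
            ≤ ‖(1 - β s) • (x s - p s)‖
              + ‖β s • (x s - σ s • εθ (x s) (σ s) - p s)‖ := norm_add_le _ _
          _ = (1 - β s) * ‖x s - p s‖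
              + β s * ‖x s - σ s • εθ (x s) (σ s) - p s‖ := by
              rw [norm_smul, norm_smul, Real.norm_of_nonneg hβ0,
                Real.norm_of_nonneg (by linarith : (0:ℝ) ≤ 1 - β s)]
          _ ≤ (1 + β s * (η - 1)) * d := by nlinarith
      linarith
  -- the key downward induction
  have key : ∀ j s, 1 ≤ s → s ≤ N → s + j = N →
      Metric.infDist (x N) K * ∏ i ∈ Finset.Icc s N, (1 - β i * (η + 1))
          ≤ Metric.infDist (x (s - 1)) K ∧
        Metric.infDist (x (s - 1)) K
          ≤ Metric.infDist (x N) K * ∏ i ∈ Finset.Icc s N, (1 + β i * (η - 1)) := by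
    intro j
    induction j with
    | zero =>
      intro s hs1 hsN hsj
      have hsN' : s = N := by omega
      subst hsN'
      rw [Finset.Icc_self, Finset.prod_singleton, Finset.prod_singleton]
      have h := hstep s hs1 le_rfl hinit₁ hinit₂
      constructor
      · calc Metric.infDist (x s) K * (1 - β s * (η + 1))
            = (1 - β s * (η + 1)) * Metric.infDist (x s) K := by ring
          _ ≤ _ := h.1
      · calc Metric.infDist (x (s - 1)) K
            ≤ (1 + β s * (η - 1)) * Metric.infDist (x s) K := h.2
          _ = Metric.infDist (x s) K * (1 + β s * (η - 1)) := by ring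
    | succ k ih =>
      intro s hs1 hsN hsj
      have hs1N : s + 1 ≤ N := by omega
      have ihs := ih (s + 1) (by omega) hs1N (by omega)
      simp only [Nat.add_sub_cancel] at ihs
      obtain ⟨ilo, ihi⟩ := ihs
      obtain ⟨hsc1, hsc2⟩ := hsched (s + 1) (by omega) hs1N
      simp only [Nat.add_sub_cancel] at hsc1 hsc2
      have hacc1 : (1 / ν) * Metric.infDist (x s) K ≤ Real.sqrt n * σ s := by
        calc (1 / ν) * Metric.infDist (x s) K
            ≤ (1 / ν) * (Metric.infDist (x N) K
                * ∏ i ∈ Finset.Icc (s + 1) N, (1 + β i * (η - 1))) :=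
              mul_le_mul_of_nonneg_left ihi hνinv
          _ = (1 / ν) * Metric.infDist (x N) K
                * ∏ i ∈ Finset.Icc (s + 1) N, (1 + β i * (η - 1)) := by ring
          _ ≤ Real.sqrt n * σ s := hsc1
      have hacc2 : Real.sqrt n * σ s ≤ ν * Metric.infDist (x s) K := by
        calc Real.sqrt n * σ s
            ≤ ν * Metric.infDist (x N) K
                * ∏ i ∈ Finset.Icc (s + 1) N, (1 - β i * (η + 1)) := hsc2
          _ = ν * (Metric.infDist (x N) K
                * ∏ i ∈ Finset.Icc (s + 1) N, (1 - β i * (η + 1))) := by ring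
          _ ≤ ν * Metric.infDist (x s) K :=
              mul_le_mul_of_nonneg_left ilo hν0.le
      have hst := hstep s hs1 hsN hacc1 hacc2
      have hins : Finset.Icc s N = insert s (Finset.Icc (s + 1) N) := by
        ext i; simp only [Finset.mem_Icc, Finset.mem_insert]; omega
      have hnotmem : s ∉ Finset.Icc (s + 1) N := by simp
      rw [hins, Finset.prod_insert hnotmem, Finset.prod_insert hnotmem]
      obtain ⟨slo, shi⟩ := hst
      constructor
      · by_cases hc : 0 ≤ 1 - β s * (η + 1)
        · calc Metric.infDist (x N) K * ((1 - β s * (η + 1))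
                * ∏ i ∈ Finset.Icc (s + 1) N, (1 - β i * (η + 1)))
              = (1 - β s * (η + 1)) * (Metric.infDist (x N) K
                * ∏ i ∈ Finset.Icc (s + 1) N, (1 - β i * (η + 1))) := by ring
            _ ≤ (1 - β s * (η + 1)) * Metric.infDist (x s) K :=
                mul_le_mul_of_nonneg_left ilo hc
            _ ≤ Metric.infDist (x (s - 1)) K := slo
        · push_neg at hc
          have h0 : 0 ≤ Real.sqrt n * σ s :=
            mul_nonneg (Real.sqrt_nonneg _) (hσpos s hsN).le
          have hP : 0 ≤ Metric.infDist (x N) K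
              * ∏ i ∈ Finset.Icc (s + 1) N, (1 - β i * (η + 1)) := by
            nlinarith
          have hneg : Metric.infDist (x N) K * ((1 - β s * (η + 1))
              * ∏ i ∈ Finset.Icc (s + 1) N, (1 - β i * (η + 1))) ≤ 0 := by
            nlinarith
          exact le_trans hneg Metric.infDist_nonneg
      · have hc : 0 ≤ 1 + β s * (η - 1) := by
          obtain ⟨hβ0, hβ1⟩ := hβ s hs1 hsN
          nlinarith
        calc Metric.infDist (x (s - 1)) K
            ≤ (1 + β s * (η - 1)) * Metric.infDist (x s) K := shi
          _ ≤ (1 + β s * (η - 1)) * (Metric.infDist (x N) K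
              * ∏ i ∈ Finset.Icc (s + 1) N, (1 + β i * (η - 1))) :=
              mul_le_mul_of_nonneg_left ihi hc
          _ = Metric.infDist (x N) K * ((1 + β s * (η - 1))
              * ∏ i ∈ Finset.Icc (s + 1) N, (1 + β i * (η - 1))) := by ring
  intro t ht1 htN
  have hA := key (N - t) t ht1 htN (by omega)
  obtain ⟨hsc1, hsc2⟩ := hsched t ht1 htN
  refine ⟨hA, ?_, ?_⟩
  · calc (1 / ν) * Metric.infDist (x (t - 1)) K
        ≤ (1 / ν) * (Metric.infDist (x N) K
            * ∏ i ∈ Finset.Icc t N, (1 + β i * (η - 1))) :=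
          mul_le_mul_of_nonneg_left hA.2 hνinv
      _ = (1 / ν) * Metric.infDist (x N) K
            * ∏ i ∈ Finset.Icc t N, (1 + β i * (η - 1)) := by ring
      _ ≤ Real.sqrt n * σ (t - 1) := hsc1
  · calc Real.sqrt n * σ (t - 1)
        ≤ ν * Metric.infDist (x N) K
            * ∏ i ∈ Finset.Icc t N, (1 - β i * (η + 1)) := hsc2
      _ = ν * (Metric.infDist (x N) K
            * ∏ i ∈ Finset.Icc t N, (1 - β i * (η + 1))) := by ring
      _ ≤ ν * Metric.infDist (x (t - 1)) K :=
          mul_le_mul_of_nonneg_left hA.1 hν0.le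
end

section
/- Let K ⊆ ℝⁿ be closed and nonempty, let 0 < η < 1 and ν ≥ 1, and let ε_θ : ℝⁿ × ℝ_{>0} → ℝⁿ be an (η, ν)-approximate projection. Let σ_N > σ_{N−1} > … > σ_0 > 0 be an (η, ν)-admissible schedule and set β_t = 1 − σ_{t−1}/σ_t ∈ [0, 1) for t = 1, …, N. Let x_N ∈ ℝⁿ satisfy dist_K(x_N) = √n·σ_N, and define the DDIM iterates x_{t−1} = x_t + (σ_{t−1} − σ_t)·ε_θ(x_t, σ_t) for t = N, …, 1. Assume each x_t has a unique projection p_t onto K. Then: (i) for every t ∈ {1, …, N} there exists e_t ∈ ℝⁿ with ‖e_t‖ ≤ η·dist_K(x_t) such that x_{t−1} = x_t − β_t·((x_t − p_t) + e_t); (ii) (1/ν)·dist_K(x_t) ≤ √n·σ_t ≤ ν·dist_K(x_t) for every t ∈ {0, …, N}; and (iii) dist_K(x_N)·∏_{i=t}^{N} (1 − β_i·(η + 1)) ≤ dist_K(x_{t−1}) ≤ dist_K(x_N)·∏_{i=t}^{N} (1 + β_i·(η − 1)) for every t ∈ {1, …, N}. -/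
private lemma stmt10_prod_icc_bot {t N : ℕ} (h : t ≤ N) (f : ℕ → ℝ) :
    ∏ i ∈ Finset.Icc t N, f i = f t * ∏ i ∈ Finset.Icc (t+1) N, f i := by
  have hins : Finset.Icc t N = insert t (Finset.Icc (t+1) N) := by
    ext i; simp only [Finset.mem_Icc, Finset.mem_insert]; omega
  rw [hins, Finset.prod_insert (by simp [Finset.mem_Icc])]

/-- DDIM with an `(η, ν)`-approximate projection denoiser and an
`(η, ν)`-admissible decreasing schedule is approximate gradient descent on `½·dist_K²`:
each step has relative error at most `η`, `√n·σ_t` stays a `ν`-accurate estimate of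
`dist_K(x_t)`, and the multiplicative distance bounds hold. -/
theorem stmt_10 {n : ℕ} (K : Set (EuclideanSpace ℝ (Fin n))) (hKc : IsClosed K)
    (hKne : K.Nonempty)
    (η ν : ℝ) (hη0 : 0 < η) (hη1 : η < 1) (hν : 1 ≤ ν)
    (εθ : EuclideanSpace ℝ (Fin n) → ℝ → EuclideanSpace ℝ (Fin n))
    -- ε_θ is an (η, ν)-approximate projection:
    (hεθ : ∀ (y : EuclideanSpace ℝ (Fin n)) (s : ℝ), 0 < s →
      ∀ q : EuclideanSpace ℝ (Fin n),
        (q ∈ K ∧ dist y q = Metric.infDist y K ∧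
          ∀ q' ∈ K, dist y q' = Metric.infDist y K → q' = q) →
        (1 / ν) * Metric.infDist y K ≤ Real.sqrt n * s →
        Real.sqrt n * s ≤ ν * Metric.infDist y K →
        ‖y - s • εθ y s - q‖ ≤ η * Metric.infDist y K)
    (N : ℕ) (σ : ℕ → ℝ) (β : ℕ → ℝ)
    (hσ0 : 0 < σ 0)
    (hσmono : ∀ t, t < N → σ t < σ (t + 1))
    (hβdef : ∀ t, 1 ≤ t → t ≤ N → β t = 1 - σ (t - 1) / σ t)
    -- the schedule is (η, ν)-admissible:
    (hadm : ∀ t, 1 ≤ t → t ≤ N →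
      (1 / ν) * ∏ i ∈ Finset.Icc t N, (1 + β i * (η - 1))
          ≤ ∏ i ∈ Finset.Icc t N, (1 - β i) ∧
        ∏ i ∈ Finset.Icc t N, (1 - β i)
          ≤ ν * ∏ i ∈ Finset.Icc t N, (1 - β i * (η + 1)))
    (x : ℕ → EuclideanSpace ℝ (Fin n))
    (hinit : Metric.infDist (x N) K = Real.sqrt n * σ N)
    (hiter : ∀ t, 1 ≤ t → t ≤ N →
      x (t - 1) = x t + (σ (t - 1) - σ t) • εθ (x t) (σ t))
    (p : ℕ → EuclideanSpace ℝ (Fin n))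
    (hproj : ∀ t, t ≤ N →
      p t ∈ K ∧ dist (x t) (p t) = Metric.infDist (x t) K ∧
        ∀ q' ∈ K, dist (x t) q' = Metric.infDist (x t) K → q' = p t) :
    (∀ t, 1 ≤ t → t ≤ N →
      ∃ e : EuclideanSpace ℝ (Fin n), ‖e‖ ≤ η * Metric.infDist (x t) K ∧
        x (t - 1) = x t - β t • ((x t - p t) + e)) ∧
    (∀ t, t ≤ N →
      (1 / ν) * Metric.infDist (x t) K ≤ Real.sqrt n * σ t ∧
        Real.sqrt n * σ t ≤ ν * Metric.infDist (x t) K) ∧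
    (∀ t, 1 ≤ t → t ≤ N →
      Metric.infDist (x N) K * ∏ i ∈ Finset.Icc t N, (1 - β i * (η + 1))
          ≤ Metric.infDist (x (t - 1)) K ∧
        Metric.infDist (x (t - 1)) K
          ≤ Metric.infDist (x N) K * ∏ i ∈ Finset.Icc t N, (1 + β i * (η - 1))) := by
  have hνpos : (0:ℝ) < ν := lt_of_lt_of_le one_pos hν
  have hd0 : ∀ t, 0 ≤ Metric.infDist (x t) K := fun t => Metric.infDist_nonneg
  -- positivity of σ
  have hσpos : ∀ t, t ≤ N → 0 < σ t := by
    intro t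
    induction t with
    | zero => intro _; exact hσ0
    | succ s ih => intro h; exact lt_trans (ih (by omega)) (hσmono s (by omega))
  -- β bounds
  have hβ01 : ∀ t, 1 ≤ t → t ≤ N → 0 < β t ∧ β t < 1 := by
    intro t h1 h2
    have hst : σ (t-1) < σ t := by
      have := hσmono (t-1) (by omega)
      rwa [Nat.sub_add_cancel h1] at this
    have hpos : 0 < σ (t-1) := hσpos _ (by omega)
    have hpost : 0 < σ t := hσpos _ h2
    rw [hβdef t h1 h2]
    constructor
    · have : σ (t-1)/σ t < 1 := (div_lt_one hpost).mpr hst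
      linarith
    · have : 0 < σ (t-1)/σ t := div_pos hpos hpost
      linarith
  -- telescoping product
  have htel : ∀ k t, t + k = N →
      ∏ i ∈ Finset.Icc (t+1) N, (1 - β i) = σ t / σ N := by
    intro k
    induction k with
    | zero =>
      intro t htk
      have ht : t = N := by omega
      rw [Finset.Icc_eq_empty (by omega), Finset.prod_empty, ht,
        div_self (ne_of_gt (hσpos N le_rfl))]
    | succ k ih =>
      intro t htk
      have h1 : t + 1 ≤ N := by omega
      rw [stmt10_prod_icc_bot h1, ih (t+1) (by omega)]
      have hb : β (t+1) = 1 - σ t / σ (t+1) := by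
        have := hβdef (t+1) (by omega) h1
        simpa using this
      have h2 : (0:ℝ) < σ (t+1) := hσpos _ h1
      have h3 : (0:ℝ) < σ N := hσpos _ le_rfl
      rw [hb]
      field_simp
      ring
  -- positivity of the (1 - β(η+1)) products
  have hLPpos : ∀ t, 1 ≤ t → t ≤ N →
      0 < ∏ i ∈ Finset.Icc t N, (1 - β i * (η+1)) := by
    intro t h1 h2
    have hPB : ∏ i ∈ Finset.Icc t N, (1 - β i) = σ (t-1) / σ N := by
      have := htel (N - (t-1)) (t-1) (by omega)
      rwa [Nat.sub_add_cancel h1] at this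
    have hPBpos : 0 < ∏ i ∈ Finset.Icc t N, (1 - β i) := by
      rw [hPB]; exact div_pos (hσpos _ (by omega)) (hσpos _ le_rfl)
    have hle := (hadm t h1 h2).2
    by_contra hcon
    push_neg at hcon
    nlinarith
  have hfacLP : ∀ t, 1 ≤ t → t ≤ N → 0 < 1 - β t * (η+1) := by
    intro t h1 h2
    have hprod := hLPpos t h1 h2
    rw [stmt10_prod_icc_bot h2] at hprod
    have hLP' : 0 < ∏ i ∈ Finset.Icc (t+1) N, (1 - β i * (η+1)) := by
      rcases eq_or_lt_of_le h2 with he | hl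
      · rw [he, Finset.Icc_eq_empty (by omega), Finset.prod_empty]; exact one_pos
      · exact hLPpos (t+1) (by omega) hl
    rcases mul_pos_iff.mp hprod with ⟨ha, _⟩ | ⟨_, hb⟩
    · exact ha
    · linarith
  have hfacUP : ∀ t, 1 ≤ t → t ≤ N → 0 < 1 + β t * (η-1) := by
    intro t h1 h2
    obtain ⟨hb0, hb1⟩ := hβ01 t h1 h2
    nlinarith
  -- the one-step lemma
  have hstep : ∀ t, 1 ≤ t → t ≤ N →
      (1/ν) * Metric.infDist (x t) K ≤ Real.sqrt n * σ t →
      Real.sqrt n * σ t ≤ ν * Metric.infDist (x t) K →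
      (∃ e : EuclideanSpace ℝ (Fin n), ‖e‖ ≤ η * Metric.infDist (x t) K ∧
          x (t-1) = x t - β t • ((x t - p t) + e)) ∧
        (1 - β t * (η+1)) * Metric.infDist (x t) K ≤ Metric.infDist (x (t-1)) K ∧
        Metric.infDist (x (t-1)) K ≤ (1 + β t * (η-1)) * Metric.infDist (x t) K := by
    intro t h1 h2 hlo hhi
    obtain ⟨hpK, hpd, hpu⟩ := hproj t h2
    have hσt : 0 < σ t := hσpos t h2
    have happ := hεθ (x t) (σ t) hσt (p t) ⟨hpK, hpd, hpu⟩ hlo hhi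
    set e : EuclideanSpace ℝ (Fin n) := -(x t - σ t • εθ (x t) (σ t) - p t) with he
    have hne : ‖e‖ ≤ η * Metric.infDist (x t) K := by rw [he, norm_neg]; exact happ
    have hsum : (x t - p t) + e = σ t • εθ (x t) (σ t) := by rw [he]; abel
    have hβσ : β t * σ t = σ t - σ (t-1) := by
      rw [hβdef t h1 h2]; field_simp
    have hx : x (t-1) = x t - β t • ((x t - p t) + e) := by
      rw [hsum, hiter t h1 h2, smul_smul, hβσ]
      module
    obtain ⟨hb0, hb1⟩ := hβ01 t h1 h2
    have hxp : ‖x t - p t‖ = Metric.infDist (x t) K := by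
      rw [← dist_eq_norm]; exact hpd
    refine ⟨⟨e, hne, hx⟩, ?_, ?_⟩
    · -- lower bound
      have hll : Metric.infDist (x t) K ≤
          Metric.infDist (x (t-1)) K + dist (x t) (x (t-1)) :=
        Metric.infDist_le_infDist_add_dist
      have hdd : dist (x t) (x (t-1)) = β t * ‖(x t - p t) + e‖ := by
        rw [dist_eq_norm, hx, sub_sub_cancel, norm_smul, Real.norm_eq_abs,
          abs_of_nonneg hb0.le]
      have hnv : ‖(x t - p t) + e‖ ≤
          Metric.infDist (x t) K + η * Metric.infDist (x t) K := by
        refine le_trans (norm_add_le _ _) ?_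
        rw [hxp]; linarith
      nlinarith [mul_le_mul_of_nonneg_left hnv hb0.le]
    · -- upper bound
      have h1' : Metric.infDist (x (t-1)) K ≤ dist (x (t-1)) (p t) :=
        Metric.infDist_le_dist_of_mem hpK
      have h2' : x (t-1) - p t = (1 - β t) • (x t - p t) - β t • e := by
        rw [hx]; module
      have h3' : ‖x (t-1) - p t‖ ≤ (1 - β t) * ‖x t - p t‖ + β t * ‖e‖ := by
        rw [h2']
        refine le_trans (norm_sub_le _ _) ?_
        rw [norm_smul, norm_smul, Real.norm_eq_abs, Real.norm_eq_abs,
          abs_of_nonneg (by linarith : (0:ℝ) ≤ 1 - β t), abs_of_nonneg hb0.le]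
      rw [dist_eq_norm] at h1'
      nlinarith [mul_le_mul_of_nonneg_left hne hb0.le, hxp, hd0 t]
  -- from the product bounds at s, derive the σ-estimates (part ii) at s
  have hII : ∀ s, s ≤ N →
      Metric.infDist (x N) K * ∏ i ∈ Finset.Icc (s+1) N, (1 - β i * (η+1)) ≤
        Metric.infDist (x s) K →
      Metric.infDist (x s) K ≤
        Metric.infDist (x N) K * ∏ i ∈ Finset.Icc (s+1) N, (1 + β i * (η-1)) →
      (1/ν) * Metric.infDist (x s) K ≤ Real.sqrt n * σ s ∧
        Real.sqrt n * σ s ≤ ν * Metric.infDist (x s) K := by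
    intro s hs hlow hup
    rcases eq_or_lt_of_le hs with he | hl
    · subst he
      rw [← hinit]
      have hinv : 1/ν ≤ 1 := by rw [div_le_one hνpos]; exact hν
      constructor
      · nlinarith [hd0 s]
      · nlinarith [hd0 s]
    · have hPB : ∏ i ∈ Finset.Icc (s+1) N, (1 - β i) = σ s / σ N :=
        htel (N - s) s (by omega)
      have hσN : (0:ℝ) < σ N := hσpos N le_rfl
      have hσs : Real.sqrt n * σ s =
          Metric.infDist (x N) K * (σ s / σ N) := by
        rw [hinit]; field_simp
      obtain ⟨hadm1, hadm2⟩ := hadm (s+1) (by omega) hl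
      constructor
      · calc (1/ν) * Metric.infDist (x s) K
            ≤ (1/ν) * (Metric.infDist (x N) K *
                ∏ i ∈ Finset.Icc (s+1) N, (1 + β i * (η-1))) :=
              mul_le_mul_of_nonneg_left hup (by positivity)
          _ = Metric.infDist (x N) K *
                ((1/ν) * ∏ i ∈ Finset.Icc (s+1) N, (1 + β i * (η-1))) := by ring
          _ ≤ Metric.infDist (x N) K * ∏ i ∈ Finset.Icc (s+1) N, (1 - β i) :=
              mul_le_mul_of_nonneg_left hadm1 (hd0 N)
          _ = Real.sqrt n * σ s := by rw [hPB, ← hσs]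
      · calc Real.sqrt n * σ s
            = Metric.infDist (x N) K * ∏ i ∈ Finset.Icc (s+1) N, (1 - β i) := by
              rw [hPB, hσs]
          _ ≤ Metric.infDist (x N) K *
                (ν * ∏ i ∈ Finset.Icc (s+1) N, (1 - β i * (η+1))) :=
              mul_le_mul_of_nonneg_left hadm2 (hd0 N)
          _ = ν * (Metric.infDist (x N) K *
                ∏ i ∈ Finset.Icc (s+1) N, (1 - β i * (η+1))) := by ring
          _ ≤ ν * Metric.infDist (x s) K :=
              mul_le_mul_of_nonneg_left hlow hνpos.le
  -- the main induction
  have hmain : ∀ k t, t + k = N →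
      Metric.infDist (x N) K * ∏ i ∈ Finset.Icc (t+1) N, (1 - β i * (η+1)) ≤
        Metric.infDist (x t) K ∧
      Metric.infDist (x t) K ≤
        Metric.infDist (x N) K * ∏ i ∈ Finset.Icc (t+1) N, (1 + β i * (η-1)) := by
    intro k
    induction k with
    | zero =>
      intro t htk
      have ht : t = N := by omega
      subst ht
      rw [Finset.Icc_eq_empty (by omega)]
      simp
    | succ k ih =>
      intro t htk
      have hs := ih (t+1) (by omega)
      have hIIs := hII (t+1) (by omega) hs.1 hs.2
      obtain ⟨_, hlo', hup'⟩ := hstep (t+1) (by omega) (by omega) hIIs.1 hIIs.2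
      simp only [Nat.add_sub_cancel] at hlo' hup'
      have hs1 : t + 1 ≤ N := by omega
      constructor
      · rw [stmt10_prod_icc_bot hs1]
        have hfac := hfacLP (t+1) (by omega) hs1
        calc Metric.infDist (x N) K * ((1 - β (t+1) * (η+1)) *
              ∏ i ∈ Finset.Icc (t+1+1) N, (1 - β i * (η+1)))
            = (1 - β (t+1) * (η+1)) * (Metric.infDist (x N) K *
              ∏ i ∈ Finset.Icc (t+1+1) N, (1 - β i * (η+1))) := by ring
          _ ≤ (1 - β (t+1) * (η+1)) * Metric.infDist (x (t+1)) K :=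
              mul_le_mul_of_nonneg_left hs.1 hfac.le
          _ ≤ Metric.infDist (x t) K := hlo'
      · rw [stmt10_prod_icc_bot hs1]
        have hfac := hfacUP (t+1) (by omega) hs1
        calc Metric.infDist (x t) K
            ≤ (1 + β (t+1) * (η-1)) * Metric.infDist (x (t+1)) K := hup'
          _ ≤ (1 + β (t+1) * (η-1)) * (Metric.infDist (x N) K *
              ∏ i ∈ Finset.Icc (t+1+1) N, (1 + β i * (η-1))) :=
              mul_le_mul_of_nonneg_left hs.2 hfac.le
          _ = Metric.infDist (x N) K * ((1 + β (t+1) * (η-1)) *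
              ∏ i ∈ Finset.Icc (t+1+1) N, (1 + β i * (η-1))) := by ring
  have hpart2 : ∀ t, t ≤ N →
      (1/ν) * Metric.infDist (x t) K ≤ Real.sqrt n * σ t ∧
        Real.sqrt n * σ t ≤ ν * Metric.infDist (x t) K := by
    intro t ht
    obtain ⟨hl, hu⟩ := hmain (N - t) t (by omega)
    exact hII t ht hl hu
  refine ⟨?_, hpart2, ?_⟩
  · intro t h1 h2
    obtain ⟨hl, hu⟩ := hpart2 t h2
    exact (hstep t h1 h2 hl hu).1
  · intro t h1 h2
    have := hmain (N - (t-1)) (t-1) (by omega)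
    rwa [Nat.sub_add_cancel h1] at this
end

section
/- Fix an integer N ≥ 1, η > 0, ν ≥ 1, and β ∈ [0, 1), and consider the constant-step schedule with β_t = β for all t (i.e. σ_{t−1} = (1 − β)·σ_t). Then this schedule is (η, ν)-admissible — i.e. for all t ∈ {1, …, N}: (1/ν)·(1 + β·(η − 1))^{N−t+1} ≤ (1 − β)^{N−t+1} ≤ ν·(1 − β·(η + 1))^{N−t+1} — if and only if β ≤ c/(η + c), where c = 1 − ν^{−1/N}. -/
/-- For the constant-step schedule `β_t = β`, `(η, ν)`-admissibility over
`N` steps holds if and only if `β ≤ c/(η + c)` where `c = 1 − ν^{−1/N}`. -/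
theorem stmt_11 (N : ℕ) (hN : 1 ≤ N) (η ν β : ℝ)
    (hη : 0 < η) (hν : 1 ≤ ν) (hβ0 : 0 ≤ β) (hβ1 : β < 1) :
    (∀ t, 1 ≤ t → t ≤ N →
      (1 / ν) * (1 + β * (η - 1)) ^ (N - t + 1) ≤ (1 - β) ^ (N - t + 1) ∧
        (1 - β) ^ (N - t + 1) ≤ ν * (1 - β * (η + 1)) ^ (N - t + 1))
    ↔ β ≤ (1 - ν ^ (-(1 : ℝ) / N)) / (η + (1 - ν ^ (-(1 : ℝ) / N))) := by
  have hν0 : (0:ℝ) < ν := lt_of_lt_of_le one_pos hν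
  have hNpos : (0:ℝ) < (N:ℝ) := by exact_mod_cast hN
  set s : ℝ := ν ^ ((1:ℝ)/N) with hs_def
  have hs1 : 1 ≤ s := by
    have := Real.rpow_le_rpow (z := (1:ℝ)/N) (by norm_num) hν (by positivity)
    rwa [Real.one_rpow] at this
  have hs0 : 0 < s := lt_of_lt_of_le one_pos hs1
  have hsN : s ^ N = ν := by
    rw [hs_def, ← Real.rpow_natCast (ν ^ ((1:ℝ)/N)) N, ← Real.rpow_mul hν0.le,
      one_div, inv_mul_cancel₀ (ne_of_gt hNpos), Real.rpow_one]
  have hinv : ν ^ (-(1:ℝ)/(N:ℝ)) = s⁻¹ := by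
    rw [neg_div, Real.rpow_neg hν0.le, hs_def]
  have hinv1 : s⁻¹ ≤ 1 := inv_le_one_of_one_le₀ hs1
  have hD : 0 < η + (1 - s⁻¹) := by nlinarith
  have hss : s * s⁻¹ = 1 := mul_inv_cancel₀ hs0.ne'
  rw [hinv]
  constructor
  · intro h
    have h2 := (h 1 le_rfl hN).2
    have hk : N - 1 + 1 = N := Nat.succ_pred_eq_of_pos hN
    rw [hk] at h2
    have h3 := (h N hN le_rfl).2
    have hk2 : N - N + 1 = 1 := by simp
    rw [hk2] at h3
    simp only [pow_one] at h3
    have hbase : 0 < 1 - β * (η + 1) := by nlinarith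
    have key : 1 - β ≤ s * (1 - β * (η + 1)) := by
      have hpow : (1 - β) ^ N ≤ (s * (1 - β * (η + 1))) ^ N := by
        rw [mul_pow, hsN]; exact h2
      exact le_of_pow_le_pow_left₀ (by omega) (mul_nonneg hs0.le hbase.le) hpow
    have h4 : s⁻¹ * (1 - β) ≤ 1 - β * (η + 1) := by
      have := mul_le_mul_of_nonneg_left key (inv_nonneg.mpr hs0.le)
      rwa [← mul_assoc, inv_mul_cancel₀ hs0.ne', one_mul] at this
    rw [le_div_iff₀ hD]
    nlinarith [h4]
  · intro h t ht1 htN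
    set k := N - t + 1 with hkdef
    have hkN : k ≤ N := by omega
    have h' : β * (η + (1 - s⁻¹)) ≤ 1 - s⁻¹ := (le_div_iff₀ hD).mp h
    have key : s⁻¹ * (1 - β) ≤ 1 - β * (η + 1) := by nlinarith
    have hpowk : s ^ k ≤ ν := hsN ▸ pow_le_pow_right₀ hs1 hkN
    constructor
    · rw [one_div, inv_mul_le_iff₀ hν0]
      have hcross : 0 ≤ s + s⁻¹ - 2 := by nlinarith [sq_nonneg (s - 1)]
      have hb1 : 1 + β * (η - 1) ≤ s * (1 - β) := by
        nlinarith [key, mul_nonneg hcross (by linarith : (0:ℝ) ≤ 1 - β)]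
      calc (1 + β * (η - 1)) ^ k ≤ (s * (1 - β)) ^ k :=
            pow_le_pow_left₀ (by nlinarith) hb1 k
        _ = s ^ k * (1 - β) ^ k := mul_pow _ _ _
        _ ≤ ν * (1 - β) ^ k :=
            mul_le_mul_of_nonneg_right hpowk (pow_nonneg (by linarith) k)
    · have e1 : (1:ℝ) - β = s * (s⁻¹ * (1 - β)) := by
        rw [← mul_assoc, hss, one_mul]
      calc (1 - β) ^ k = s ^ k * (s⁻¹ * (1 - β)) ^ k := by rw [← mul_pow, ← e1]
        _ ≤ ν * (1 - β * (η + 1)) ^ k :=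
            mul_le_mul hpowk (pow_le_pow_left₀ (mul_nonneg (by positivity) (by linarith)) key k)
              (pow_nonneg (mul_nonneg (by positivity) (by linarith)) k) hν0.le
end

section
/- Let η > 0, ν ≥ 1, and μ ∈ ℝ. For each integer N ≥ 1 define β_{*,N} = (1 − ν^{−1/N})/(η + 1 − ν^{−1/N}). Then lim_{N→∞} (1 − μ·β_{*,N})^N = ν^{−μ/η}. -/
open Filter Real

/-- With `β_{*,N} = (1 − ν^{−1/N})/(η + 1 − ν^{−1/N})`, for any real `μ`,
`(1 − μ·β_{*,N})^N → ν^{−μ/η}` as `N → ∞`. -/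
theorem stmt_12 (η ν μ : ℝ) (hη : 0 < η) (hν : 1 ≤ ν) :
    Filter.Tendsto
      (fun N : ℕ =>
        (1 - μ * ((1 - ν ^ (-(1 : ℝ) / N)) / (η + 1 - ν ^ (-(1 : ℝ) / N)))) ^ N)
      Filter.atTop (nhds (ν ^ (-μ / η))) := by
  rcases eq_or_lt_of_le hν with hν1 | hν1
  · subst hν1
    simp [Real.one_rpow]
  rcases eq_or_ne μ 0 with hμ | hμ
  · subst hμ
    simp
  have hν0 : (0:ℝ) < ν := lt_trans one_pos hν1
  set L := Real.log ν with hLdef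
  set c : ℕ → ℝ := fun N => 1 - Real.exp (-(L/N)) with hcdef
  set b : ℕ → ℝ := fun N => c N / (η + c N) with hbdef
  set y : ℕ → ℝ := fun N => 1 - μ * b N with hydef
  clear_value c b y
  have hL0 : 0 < L := by rw [hLdef]; exact Real.log_pos hν1
  have hrw : ∀ N : ℕ, ν ^ (-(1:ℝ)/N) = Real.exp (-(L/N)) := by
    intro N
    rw [Real.rpow_def_of_pos hν0]
    congr 1
    rw [hLdef]; ring
  -- -(L/N) → 0 within ≠ 0
  have h1 : Tendsto (fun N : ℕ => -(L/(N:ℝ))) atTop (nhdsWithin 0 {(0:ℝ)}ᶜ) := by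
    apply tendsto_nhdsWithin_of_tendsto_nhds_of_eventually_within
    · simpa using (tendsto_const_div_atTop_nhds_zero_nat L).neg
    · filter_upwards [eventually_gt_atTop 0] with N hN
      have hN' : (0:ℝ) < N := by exact_mod_cast hN
      have : L / (N:ℝ) ≠ 0 := ne_of_gt (div_pos hL0 hN')
      simp [this]
  have h2 : Tendsto (fun N : ℕ => (Real.exp (-(L/N)) - 1) / (-(L/N))) atTop (nhds 1) := by
    have hs := hasDerivAt_iff_tendsto_slope.mp (Real.hasDerivAt_exp 0)
    rw [Real.exp_zero] at hs
    refine (hs.comp h1).congr fun N => ?_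
    simp [Function.comp, slope_def_field]
  have hNc : Tendsto (fun N : ℕ => (N:ℝ) * c N) atTop (nhds L) := by
    have h3 := h2.const_mul L
    rw [mul_one] at h3
    refine h3.congr' ?_
    filter_upwards [eventually_gt_atTop 0] with N hN
    have hN' : (N:ℝ) ≠ 0 := by positivity
    simp only [hcdef]
    field_simp [hL0.ne']
    ring
  have hc0 : Tendsto c atTop (nhds 0) := by
    have he : Tendsto (fun N:ℕ => Real.exp (-(L/N))) atTop (nhds 1) := by
      have := (Real.continuous_exp.continuousAt (x := (0:ℝ))).tendsto.comp
        (h1.mono_right nhdsWithin_le_nhds)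
      simpa [Function.comp_def] using this
    have h5 : Tendsto (fun N:ℕ => 1 - Real.exp (-(L/N))) atTop (nhds (1-1)) :=
      tendsto_const_nhds.sub he
    rw [hcdef]
    simpa using h5
  have hden : Tendsto (fun N => η + c N) atTop (nhds η) := by
    simpa using tendsto_const_nhds.add hc0
  have hb0 : Tendsto b atTop (nhds 0) := by
    have h6 := hc0.div hden hη.ne'
    rw [zero_div] at h6
    rw [hbdef]
    exact h6
  have hNb : Tendsto (fun N : ℕ => (N:ℝ) * b N) atTop (nhds (L/η)) := by
    have := hNc.div hden hη.ne'
    refine this.congr fun N => ?_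
    simp only [hbdef]
    exact mul_div_assoc _ _ _
  have hy1 : Tendsto y atTop (nhds 1) := by
    have h7 : Tendsto (fun N => 1 - μ * b N) atTop (nhds (1 - μ * 0)) :=
      tendsto_const_nhds.sub (hb0.const_mul μ)
    rw [mul_zero, sub_zero] at h7
    rw [hydef]
    exact h7
  have hbpos : ∀ᶠ N in atTop, 0 < b N := by
    filter_upwards [eventually_gt_atTop 0] with N hN
    have hN' : (0:ℝ) < N := by exact_mod_cast hN
    have hcpos : 0 < c N := by
      have : Real.exp (-(L/N)) < 1 := by
        rw [Real.exp_lt_one_iff]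
        simpa using div_pos hL0 hN'
      simp only [hcdef]
      linarith
    have hd : (0:ℝ) < η + c N := by linarith
    simp only [hbdef]
    exact div_pos hcpos hd
  have hypos : ∀ᶠ N in atTop, 0 < y N :=
    hy1.eventually (eventually_gt_nhds (by norm_num : (0:ℝ) < 1))
  have hyne : ∀ᶠ N in atTop, y N ≠ 1 := by
    filter_upwards [hbpos] with N hb
    simp only [hydef]
    intro h
    have : μ * b N = 0 := by linarith
    rcases mul_eq_zero.mp this with h' | h'
    · exact hμ h'
    · exact hb.ne' h'
  have hy1' : Tendsto y atTop (nhdsWithin 1 {(1:ℝ)}ᶜ) :=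
    tendsto_nhdsWithin_of_tendsto_nhds_of_eventually_within _ hy1 (by
      filter_upwards [hyne] with N h using h)
  have hslope : Tendsto (fun N => Real.log (y N) / (y N - 1)) atTop (nhds 1) := by
    have hs := hasDerivAt_iff_tendsto_slope.mp (Real.hasDerivAt_log one_ne_zero)
    rw [inv_one] at hs
    refine (hs.comp hy1').congr fun N => ?_
    simp [Function.comp, slope_def_field]
  have hNlog : Tendsto (fun N : ℕ => (N:ℝ) * Real.log (y N)) atTop
      (nhds (-(μ * (L/η)))) := by
    have h4 := hslope.mul ((hNb.const_mul μ).neg)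
    rw [one_mul] at h4
    refine h4.congr' ?_
    filter_upwards [hyne] with N hne
    have hne2 : y N - 1 ≠ 0 := sub_ne_zero.mpr hne
    have hyd : y N - 1 = -(μ * b N) := by simp only [hydef]; ring
    calc Real.log (y N) / (y N - 1) * -(μ * ((N:ℝ) * b N))
        = Real.log (y N) / (y N - 1) * (y N - 1) * N := by rw [hyd]; ring
      _ = (N:ℝ) * Real.log (y N) := by rw [div_mul_cancel₀ _ hne2]; ring
  have hfin : Tendsto (fun N : ℕ => Real.exp ((N:ℝ) * Real.log (y N))) atTop
      (nhds (Real.exp (-(μ * (L/η))))) :=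
    (Real.continuous_exp.continuousAt.tendsto).comp hNlog
  have hrhs : ν ^ (-μ / η) = Real.exp (-(μ * (L/η))) := by
    rw [Real.rpow_def_of_pos hν0]
    congr 1
    rw [hLdef]; ring
  rw [hrhs]
  refine hfin.congr' ?_
  filter_upwards [hypos] with N hy0
  rw [Real.exp_nat_mul, Real.exp_log hy0]
  congr 1
  simp only [hydef, hbdef, hcdef]
  rw [hrw N]
  ring
end

section
/- Let η > 0 and ν ≥ 1, and for each integer N ≥ 1 define β_{*,N} = (1 − ν^{−1/N})/(η + 1 − ν^{−1/N}). Then lim_{N→∞} (1 − β_{*,N})^N = ν^{−1/η} and lim_{N→∞} (1 + (η − 1)·β_{*,N})^N = ν^{(η−1)/η}. -/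
open Filter Real Topology

/-- Difference quotient at 0 tends to the derivative. -/
lemma aux_slope (f : ℝ → ℝ) (d : ℝ) (hf : HasDerivAt f d 0) (h0 : f 0 = 0) :
    Tendsto (fun x => if x = 0 then d else f x / x) (𝓝 0) (𝓝 d) := by
  have hs : Tendsto (slope f 0) (𝓝[≠] 0) (𝓝 d) :=
    hasDerivAt_iff_tendsto_slope.mp hf
  have : 𝓝 (0 : ℝ) = 𝓝[≠] 0 ⊔ pure 0 := (nhdsNE_sup_pure 0).symm
  rw [this, tendsto_sup]
  constructor
  · refine hs.congr' ?_
    filter_upwards [self_mem_nhdsWithin] with x hx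
    simp only [Set.mem_compl_iff, Set.mem_singleton_iff] at hx
    simp [slope, hx, h0, div_eq_inv_mul]
  · simpa using tendsto_pure_nhds (fun x : ℝ => if x = 0 then d else f x / x) 0

lemma aux_key (a : ℕ → ℝ) (L : ℝ) (ha : ∀ N, 0 ≤ a N)
    (h : Tendsto (fun N : ℕ => (N : ℝ) * a N) atTop (𝓝 L))
    (ha0 : Tendsto a atTop (𝓝 0)) :
    Tendsto (fun N : ℕ => (1 + a N) ^ N) atTop (𝓝 (Real.exp L)) := by
  set g : ℝ → ℝ := fun x => if x = 0 then 1 else Real.log (1 + x) / x with hg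
  have hderiv : HasDerivAt (fun x : ℝ => Real.log (1 + x)) 1 0 := by
    have h1 : HasDerivAt (fun x : ℝ => 1 + x) 1 0 := by
      simpa using (hasDerivAt_id (0:ℝ)).const_add 1
    have := (Real.hasDerivAt_log (by norm_num : (1:ℝ) + 0 ≠ 0)).comp 0 h1
    exact this.congr_deriv (by norm_num)
  have hgt : Tendsto g (𝓝 0) (𝓝 1) := by
    have := aux_slope (fun x => Real.log (1 + x)) 1 hderiv (by simp)
    simpa [hg] using this
  have hlog : Tendsto (fun N : ℕ => (N : ℝ) * Real.log (1 + a N)) atTop (𝓝 (L * 1)) := by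
    have heq : ∀ N : ℕ, (N : ℝ) * Real.log (1 + a N) = ((N : ℝ) * a N) * g (a N) := by
      intro N
      by_cases hA : a N = 0
      · simp [hA, hg]
      · simp only [hg, if_neg hA]
        field_simp
    simpa [heq] using h.mul (hgt.comp ha0)
  rw [mul_one] at hlog
  have := (Real.continuous_exp.tendsto L).comp hlog
  refine this.congr fun N => ?_
  have hpos : (0:ℝ) < 1 + a N := by linarith [ha N]
  rw [Function.comp_apply, ← Real.log_pow, Real.exp_log (pow_pos hpos N)]

lemma aux_alg1 (η cc : ℝ) (hη : 0 < η) (hc : 0 ≤ cc) :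
    1 - cc / (η + cc) = (1 + cc / η)⁻¹ := by
  have h1 : η + cc ≠ 0 := by positivity
  have h2 : η ≠ 0 := hη.ne'
  rw [inv_eq_one_div]
  field_simp
  ring

lemma aux_alg2 (η cc : ℝ) (hη : 0 < η) (hc : 0 ≤ cc) :
    1 + (η - 1) * (cc / (η + cc)) = (1 + cc) * (1 + cc / η)⁻¹ := by
  have h1 : η + cc ≠ 0 := by positivity
  have h2 : η ≠ 0 := hη.ne'
  have h3 : (1:ℝ) + cc / η ≠ 0 := by positivity
  field_simp
  ring

/-- With `β_{*,N} = (1 − ν^{−1/N})/(η + 1 − ν^{−1/N})`,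
`(1 − β_{*,N})^N → ν^{−1/η}` and `(1 + (η − 1)·β_{*,N})^N → ν^{(η−1)/η}` as `N → ∞`. -/
theorem stmt_13 (η ν : ℝ) (hη : 0 < η) (hν : 1 ≤ ν) :
    Filter.Tendsto
      (fun N : ℕ =>
        (1 - (1 - ν ^ (-(1 : ℝ) / N)) / (η + 1 - ν ^ (-(1 : ℝ) / N))) ^ N)
      Filter.atTop (nhds (ν ^ (-(1 : ℝ) / η))) ∧
    Filter.Tendsto
      (fun N : ℕ =>
        (1 + (η - 1) * ((1 - ν ^ (-(1 : ℝ) / N)) / (η + 1 - ν ^ (-(1 : ℝ) / N)))) ^ N)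
      Filter.atTop (nhds (ν ^ ((η - 1) / η))) := by
  have hν0 : (0:ℝ) < ν := lt_of_lt_of_le one_pos hν
  set c : ℕ → ℝ := fun N => 1 - ν ^ (-(1 : ℝ) / N) with hc
  have hcexp : ∀ N : ℕ, c N = 1 - Real.exp (Real.log ν * (-(1:ℝ) / N)) := by
    intro N; simp [hc, Real.rpow_def_of_pos hν0]
  have hcnn : ∀ N, 0 ≤ c N := by
    intro N
    have : ν ^ (-(1:ℝ)/N) ≤ 1 := by
      apply Real.rpow_le_one_of_one_le_of_nonpos hν
      rcases Nat.eq_zero_or_pos N with h | h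
      · simp [h]
      · have : (0:ℝ) < N := by exact_mod_cast h
        rw [neg_div]
        simp [le_of_lt, this]
    simp [hc]; linarith
  have hc0 : Tendsto c atTop (𝓝 0) := by
    have h1 : Tendsto (fun N : ℕ => Real.log ν * (-(1:ℝ) / N)) atTop (𝓝 0) := by
      have := (tendsto_one_div_atTop_nhds_zero_nat : Tendsto (fun n : ℕ => 1 / (n:ℝ)) atTop (𝓝 0))
      have h2 : Tendsto (fun N : ℕ => -(1:ℝ) / N) atTop (𝓝 0) := by
        simpa [neg_div] using this.neg
      simpa using h2.const_mul (Real.log ν)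
    have := (Real.continuous_exp.tendsto 0).comp h1
    have h3 : Tendsto (fun N : ℕ => 1 - Real.exp (Real.log ν * (-(1:ℝ)/N))) atTop
        (𝓝 (1 - Real.exp 0)) := (tendsto_const_nhds.sub this)
    simp only [Real.exp_zero, sub_self] at h3
    exact h3.congr fun N => (hcexp N).symm
  -- N * c N → log ν
  have hNc : Tendsto (fun N : ℕ => (N:ℝ) * c N) atTop (𝓝 (Real.log ν)) := by
    set g2 : ℝ → ℝ := fun x => if x = 0 then 1 else (1 - Real.exp (-x)) / x with hg2
    have hderiv : HasDerivAt (fun x : ℝ => 1 - Real.exp (-x)) 1 0 := by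
      have h1 : HasDerivAt (fun x : ℝ => Real.exp (-x)) (-1) 0 := by
        simpa using (hasDerivAt_neg (0:ℝ)).exp
      simpa using (h1.const_sub 1)
    have hgt : Tendsto g2 (𝓝 0) (𝓝 1) := by
      have := aux_slope (fun x => 1 - Real.exp (-x)) 1 hderiv (by simp)
      simpa [hg2] using this
    set u : ℕ → ℝ := fun N => Real.log ν * ((1:ℝ) / N) with hu
    have hu0 : Tendsto u atTop (𝓝 0) := by
      simpa [hu, one_div] using tendsto_one_div_atTop_nhds_zero_nat.const_mul (Real.log ν)
    have heq : ∀ N : ℕ, (N:ℝ) * c N = ((N:ℝ) * u N) * g2 (u N) := by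
      intro N
      have hc' : c N = 1 - Real.exp (-(u N)) := by
        rw [hcexp N, hu]; ring_nf
      by_cases hzu : u N = 0
      · simp [hzu, hc']
      · rw [hc', hg2]; simp only [if_neg hzu]; field_simp
    have hNu : Tendsto (fun N : ℕ => (N:ℝ) * u N) atTop (𝓝 (Real.log ν)) := by
      apply Tendsto.congr' _ (tendsto_const_nhds (x := Real.log ν))
      filter_upwards [eventually_ge_atTop 1] with N hN
      have hN0 : (N:ℝ) ≠ 0 := by positivity
      simp only [hu]; field_simp
    have := hNu.mul (hgt.comp hu0)
    rw [mul_one] at this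
    exact this.congr fun N => (heq N).symm
  -- the two base limits
  have key1 : Tendsto (fun N : ℕ => (1 + c N / η) ^ N) atTop
      (𝓝 (Real.exp (Real.log ν / η))) := by
    apply aux_key _ _ (fun N => div_nonneg (hcnn N) hη.le)
    · refine (hNc.div_const η).congr fun N => ?_
      ring
    · simpa using hc0.div_const η
  have key2 : Tendsto (fun N : ℕ => (1 + c N) ^ N) atTop (𝓝 (Real.exp (Real.log ν))) :=
    aux_key _ _ hcnn hNc hc0
  have hden : ∀ N, η + c N ≠ 0 := fun N => by have := hcnn N; positivity
  have hη' : η ≠ 0 := hη.ne'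
  have hbase : ∀ N : ℕ, (0:ℝ) < 1 + c N / η := fun N => by
    have := div_nonneg (hcnn N) hη.le; linarith
  constructor
  · -- first limit
    have heq : ∀ N : ℕ, (1 - (1 - ν ^ (-(1:ℝ)/N)) / (η + 1 - ν ^ (-(1:ℝ)/N))) ^ N
        = ((1 + c N / η) ^ N)⁻¹ := by
      intro N
      rw [← inv_pow]
      congr 1
      have hd : η + 1 - ν ^ (-(1:ℝ)/N) = η + c N := by simp only [hc]; ring
      have hn : (1:ℝ) - ν ^ (-(1:ℝ)/N) = c N := by simp only [hc]
      rw [hd, hn]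
      exact aux_alg1 η (c N) hη (hcnn N)
    have hlim : Tendsto (fun N : ℕ => ((1 + c N / η) ^ N)⁻¹) atTop
        (𝓝 (Real.exp (Real.log ν / η))⁻¹) := key1.inv₀ (Real.exp_ne_zero _)
    have hval : (Real.exp (Real.log ν / η))⁻¹ = ν ^ (-(1:ℝ)/η) := by
      rw [Real.rpow_def_of_pos hν0, ← Real.exp_neg]
      ring_nf
    rw [← hval]
    exact hlim.congr fun N => (heq N).symm
  · have heq : ∀ N : ℕ, (1 + (η-1) * ((1 - ν ^ (-(1:ℝ)/N)) / (η + 1 - ν ^ (-(1:ℝ)/N)))) ^ N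
        = (1 + c N) ^ N * ((1 + c N / η) ^ N)⁻¹ := by
      intro N
      rw [← inv_pow, ← mul_pow]
      congr 1
      have hd : η + 1 - ν ^ (-(1:ℝ)/N) = η + c N := by simp only [hc]; ring
      have hn : (1:ℝ) - ν ^ (-(1:ℝ)/N) = c N := by simp only [hc]
      rw [hd, hn]
      exact aux_alg2 η (c N) hη (hcnn N)
    have hlim : Tendsto (fun N : ℕ => (1 + c N) ^ N * ((1 + c N / η) ^ N)⁻¹) atTop
        (𝓝 (Real.exp (Real.log ν) * (Real.exp (Real.log ν / η))⁻¹)) :=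
      key2.mul (key1.inv₀ (Real.exp_ne_zero _))
    have hval : Real.exp (Real.log ν) * (Real.exp (Real.log ν / η))⁻¹ = ν ^ ((η-1)/η) := by
      rw [Real.rpow_def_of_pos hν0, ← Real.exp_neg, ← Real.exp_add]
      congr 1
      field_simp
      ring
    rw [← hval]
    exact hlim.congr fun N => (heq N).symm
end

section
/- Let K ⊆ ℝⁿ be a nonempty set, let x ∈ ℝⁿ with dist_K(x) > 0 have a projection p onto K, let η > 0, ν ≥ 1, and let σ > 0 satisfy (1/ν)·dist_K(x) ≤ √n·σ ≤ ν·dist_K(x). If ε ∈ ℝⁿ satisfies ‖ε − √n·(x − p)/dist_K(x)‖ ≤ η, then ‖σ·ε − (x − p)‖ ≤ η̂·dist_K(x), where η̂ = (η·ν)/√n + max(ν − 1, 1 − 1/ν). -/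
/-! Write `σ • ε - (x - p) = σ • (ε - c • (x - p)) + (σ c - 1) • (x - p)` with `c = √n / dist_K(x)`.
The first term is at most `σ η ≤ ν η dist_K(x) / √n`; since `‖x - p‖ = dist_K(x)` and
`σ c = √n σ / dist_K(x) ∈ [1/ν, ν]`, the second is at most `max(ν - 1, 1 - 1/ν) · dist_K(x)`. -/

theorem norm_smul_sub_le {E : Type*} [SeminormedAddCommGroup E] [NormedSpace ℝ E]
    (σ c : ℝ) (ε u : E) :
    ‖σ • ε - u‖ ≤ |σ| * ‖ε - c • u‖ + |σ * c - 1| * ‖u‖ := by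
  have hsplit : σ • ε - u = σ • (ε - c • u) + (σ * c - 1) • u := by
    rw [smul_sub, sub_smul, one_smul, mul_smul]; abel
  calc ‖σ • ε - u‖ ≤ ‖σ • (ε - c • u)‖ + ‖(σ * c - 1) • u‖ := hsplit ▸ norm_add_le _ _
    _ = |σ| * ‖ε - c • u‖ + |σ * c - 1| * ‖u‖ := by
      rw [norm_smul, norm_smul, Real.norm_eq_abs, Real.norm_eq_abs]

theorem abs_div_sub_one_le_max {a d ν : ℝ} (hd : 0 < d)
    (h₁ : (1 / ν) * d ≤ a) (h₂ : a ≤ ν * d) :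
    |a / d - 1| ≤ max (ν - 1) (1 - 1 / ν) := by
  have hlo : 1 / ν ≤ a / d := (le_div_iff₀ hd).2 h₁
  have hhi : a / d ≤ ν := (div_le_iff₀ hd).2 h₂
  rw [abs_le]
  constructor
  · linarith [le_max_right (ν - 1) (1 - 1 / ν)]
  · linarith [le_max_left (ν - 1) (1 - 1 / ν)]

theorem stmt_14_general {n : ℕ} (K : Set (EuclideanSpace ℝ (Fin n)))
    (x p : EuclideanSpace ℝ (Fin n))
    (hp : dist x p = Metric.infDist x K)
    (hd : 0 < Metric.infDist x K)
    (η ν σ : ℝ) (hν : 1 ≤ ν) (hσ : 0 < σ)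
    (hσ₁ : (1 / ν) * Metric.infDist x K ≤ Real.sqrt n * σ)
    (hσ₂ : Real.sqrt n * σ ≤ ν * Metric.infDist x K)
    (ε : EuclideanSpace ℝ (Fin n))
    (hε : ‖ε - (Real.sqrt n / Metric.infDist x K) • (x - p)‖ ≤ η) :
    ‖σ • ε - (x - p)‖
      ≤ (η * ν / Real.sqrt n + max (ν - 1) (1 - 1 / ν)) * Metric.infDist x K := by
  set d := Metric.infDist x K
  set s := Real.sqrt n
  have hν₀ : 0 < ν := one_pos.trans_le hν
  have hs : 0 < s := by
    by_contra! hs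
    have : 0 < (1 / ν) * d := by positivity
    nlinarith [mul_nonpos_of_nonpos_of_nonneg hs hσ.le]
  have hu : ‖x - p‖ = d := by rw [← dist_eq_norm, hp]
  have hσle : |σ| ≤ ν * d / s := by
    rw [abs_of_pos hσ, le_div_iff₀ hs]; linarith
  have hscale : |σ * (s / d) - 1| ≤ max (ν - 1) (1 - 1 / ν) := by
    rw [← mul_div_assoc, mul_comm σ]; exact abs_div_sub_one_le_max hd hσ₁ hσ₂
  calc ‖σ • ε - (x - p)‖
      ≤ |σ| * ‖ε - (s / d) • (x - p)‖ + |σ * (s / d) - 1| * ‖x - p‖ := norm_smul_sub_le _ _ _ _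
    _ ≤ ν * d / s * η + max (ν - 1) (1 - 1 / ν) * d := by
      rw [hu]; gcongr
    _ = (η * ν / s + max (ν - 1) (1 - 1 / ν)) * d := by field_simp

/-- If the denoiser output `ε` is within `η` of the scaled unit gradient
`√n·(x − p)/dist_K(x)` and `√n·σ` is a `ν`-accurate estimate of `dist_K(x)`, then
`σ·ε` approximates the gradient `x − p` of `½·dist_K²` with relative error
`η̂ = ην/√n + max(ν − 1, 1 − 1/ν)`. -/
theorem stmt_14 {n : ℕ} (K : Set (EuclideanSpace ℝ (Fin n))) (hK : K.Nonempty)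
    (x p : EuclideanSpace ℝ (Fin n)) (hpK : p ∈ K)
    (hp : dist x p = Metric.infDist x K)
    (hd : 0 < Metric.infDist x K)
    (η ν σ : ℝ) (hη : 0 < η) (hν : 1 ≤ ν) (hσ : 0 < σ)
    (hσ₁ : (1 / ν) * Metric.infDist x K ≤ Real.sqrt n * σ)
    (hσ₂ : Real.sqrt n * σ ≤ ν * Metric.infDist x K)
    (ε : EuclideanSpace ℝ (Fin n))
    (hε : ‖ε - (Real.sqrt n / Metric.infDist x K) • (x - p)‖ ≤ η) :
    ‖σ • ε - (x - p)‖
      ≤ (η * ν / Real.sqrt n + max (ν - 1) (1 - 1 / ν)) * Metric.infDist x K :=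
  stmt_14_general K x p hp hd η ν σ hν hσ hσ₁ hσ₂ ε hε
end

section
/- Let 0 < ᾱ_t ≤ ᾱ_{t−1} ≤ 1 with ᾱ_t < 1, set α_t = ᾱ_t/ᾱ_{t−1} and σ_s = √((1 − ᾱ_s)/ᾱ_s) for s ∈ {t−1, t}, and let σ′ = σ_{t−1}²/σ_t and η = √(σ_{t−1}² − σ′²). Let z_t, z_{t−1}, ε, w ∈ ℝⁿ, and set x_t = z_t/√ᾱ_t, x_{t−1} = z_{t−1}/√ᾱ_{t−1}, and ẑ₀ = (z_t − √(1 − ᾱ_t)·ε)/√ᾱ_t. Then z_{t−1} = (√ᾱ_{t−1}·(1 − α_t)/(1 − ᾱ_t))·ẑ₀ + (√α_t·(1 − ᾱ_{t−1})/(1 − ᾱ_t))·z_t + √(((1 − ᾱ_{t−1})/(1 − ᾱ_t))·(1 − α_t))·w holds if and only if x_{t−1} = x_t + (σ′ − σ_t)·ε + η·w. (Equivalence of the DDPM update in the original z-coordinates with the scaled DDPM update in x-coordinates.) -/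
/-- Equivalence of the DDPM update in original `z`-coordinates with the
scaled DDPM update `x_{t−1} = x_t + (σ′ − σ_t)·ε + η·w` in `x`-coordinates, where
`σ′ = σ_{t−1}²/σ_t` and `η = √(σ_{t−1}² − σ′²)`, under the change of coordinates
`x_s = z_s/√ᾱ_s`, `σ_s = √((1 − ᾱ_s)/ᾱ_s)`. -/
theorem stmt_16 {n : ℕ} (abar_tm abar_t : ℝ)
    (h0 : 0 < abar_t) (h1 : abar_t ≤ abar_tm) (h2 : abar_tm ≤ 1) (h3 : abar_t < 1)
    (z_t z_tm ε w : EuclideanSpace ℝ (Fin n)) :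
    let α_t := abar_t / abar_tm
    let σ_t := Real.sqrt ((1 - abar_t) / abar_t)
    let σ_tm := Real.sqrt ((1 - abar_tm) / abar_tm)
    let σ' := σ_tm ^ 2 / σ_t
    let η := Real.sqrt (σ_tm ^ 2 - σ' ^ 2)
    let x_t := (Real.sqrt abar_t)⁻¹ • z_t
    let x_tm := (Real.sqrt abar_tm)⁻¹ • z_tm
    let zhat0 := (Real.sqrt abar_t)⁻¹ • (z_t - Real.sqrt (1 - abar_t) • ε)
    (z_tm = (Real.sqrt abar_tm * (1 - α_t) / (1 - abar_t)) • zhat0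
        + (Real.sqrt α_t * (1 - abar_tm) / (1 - abar_t)) • z_t
        + Real.sqrt (((1 - abar_tm) / (1 - abar_t)) * (1 - α_t)) • w
      ↔ x_tm = x_t + (σ' - σ_t) • ε + η • w) := by
  intro α_t σ_t σ_tm σ' η x_t x_tm zhat0
  have hb : 0 < abar_tm := lt_of_lt_of_le h0 h1
  have hsa : (0:ℝ) < Real.sqrt abar_t := Real.sqrt_pos.2 h0
  have hsb : (0:ℝ) < Real.sqrt abar_tm := Real.sqrt_pos.2 hb
  have h1a : (0:ℝ) < 1 - abar_t := by linarith
  have h1b : (0:ℝ) ≤ 1 - abar_tm := by linarith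
  have hsa2 : Real.sqrt abar_t ^ 2 = abar_t := Real.sq_sqrt h0.le
  have hsb2 : Real.sqrt abar_tm ^ 2 = abar_tm := Real.sq_sqrt hb.le
  have hs1a2 : Real.sqrt (1 - abar_t) ^ 2 = 1 - abar_t := Real.sq_sqrt h1a.le
  have hs1a : (0:ℝ) < Real.sqrt (1 - abar_t) := Real.sqrt_pos.2 h1a
  have hσt : σ_t = Real.sqrt (1 - abar_t) / Real.sqrt abar_t :=
    Real.sqrt_div h1a.le _
  have hσtm2 : σ_tm ^ 2 = (1 - abar_tm) / abar_tm :=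
    Real.sq_sqrt (by positivity)
  have key : (Real.sqrt abar_tm * (1 - α_t) / (1 - abar_t)) • zhat0
        + (Real.sqrt α_t * (1 - abar_tm) / (1 - abar_t)) • z_t
        + Real.sqrt (((1 - abar_tm) / (1 - abar_t)) * (1 - α_t)) • w
      = Real.sqrt abar_tm • (x_t + (σ' - σ_t) • ε + η • w) := by
    show (Real.sqrt abar_tm * (1 - α_t) / (1 - abar_t)) •
          ((Real.sqrt abar_t)⁻¹ • (z_t - Real.sqrt (1 - abar_t) • ε)) + _ + _
        = Real.sqrt abar_tm • ((Real.sqrt abar_t)⁻¹ • z_t + (σ' - σ_t) • ε + η • w)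
    match_scalars
    · -- z_t coefficient
      have e1 : Real.sqrt α_t = Real.sqrt abar_t / Real.sqrt abar_tm :=
        Real.sqrt_div h0.le _
      rw [e1]
      show Real.sqrt abar_tm * (1 - abar_t / abar_tm) / (1 - abar_t) *
          ((Real.sqrt abar_t)⁻¹ * 1) +
          Real.sqrt abar_t / Real.sqrt abar_tm * (1 - abar_tm) / (1 - abar_t) * 1
        = Real.sqrt abar_tm * ((Real.sqrt abar_t)⁻¹ * 1)
      field_simp
      linear_combination (abar_t * (abar_tm - 1)) * hsb2 + (abar_tm * (1 - abar_tm)) * hsa2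
    · -- ε coefficient
      show Real.sqrt abar_tm * (1 - abar_t / abar_tm) / (1 - abar_t) *
          ((Real.sqrt abar_t)⁻¹ * -(Real.sqrt (1 - abar_t) * 1))
        = Real.sqrt abar_tm * ((σ_tm ^ 2 / σ_t - σ_t) * 1)
      rw [hσtm2, hσt]
      field_simp
      linear_combination
        (abar_t * (1 - abar_tm)) * hs1a2
        - ((1 - abar_t) * (1 - abar_tm)) * hsa2
    · -- w coefficient
      show Real.sqrt ((1 - abar_tm) / (1 - abar_t) * (1 - abar_t / abar_tm)) * 1
        = Real.sqrt abar_tm * (Real.sqrt (σ_tm ^ 2 - σ' ^ 2) * 1)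
      rw [mul_one, mul_one, ← Real.sqrt_mul hb.le]
      congr 1
      show _ = abar_tm * (σ_tm ^ 2 - (σ_tm ^ 2 / σ_t) ^ 2)
      rw [hσtm2, hσt, div_pow, div_pow, div_pow, hs1a2, hsa2]
      field_simp
      ring
  constructor
  · intro h
    show (Real.sqrt abar_tm)⁻¹ • z_tm = _
    rw [h, key, smul_smul, inv_mul_cancel₀ hsb.ne', one_smul]
  · intro h
    have h' : (Real.sqrt abar_tm)⁻¹ • z_tm = x_t + (σ' - σ_t) • ε + η • w := h
    rw [key, ← h', smul_smul, mul_inv_cancel₀ hsb.ne', one_smul]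
end

section
/- Let K ⊆ ℝⁿ be closed and nonempty, let x ∉ K have a unique projection p onto K, let θ ∈ (0, 1], and set y = θ·x + (1 − θ)·p. Then p is the unique projection of y onto K, dist_K(y) = θ·dist_K(x), and (y − p)/dist_K(y) = (x − p)/dist_K(x); in particular the unit gradient ∇dist_K is constant along the segment between x and its projection p. -/
/-- Along the segment `y = θ·x + (1−θ)·p` between a point `x ∉ K` and its
unique projection `p`, the projection stays `p` (and is unique), the distance scales as
`dist_K(y) = θ·dist_K(x)`, and the unit gradient `(y − p)/dist_K(y) = (x − p)/dist_K(x)`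
is invariant. -/
theorem stmt_18 {n : ℕ} (K : Set (EuclideanSpace ℝ (Fin n))) (hKc : IsClosed K)
    (hKne : K.Nonempty)
    (x : EuclideanSpace ℝ (Fin n)) (hx : x ∉ K)
    (p : EuclideanSpace ℝ (Fin n)) (hpK : p ∈ K)
    (hp : dist x p = Metric.infDist x K)
    (hpu : ∀ q ∈ K, dist x q = Metric.infDist x K → q = p)
    (θ : ℝ) (hθ0 : 0 < θ) (hθ1 : θ ≤ 1) :
    let y := θ • x + (1 - θ) • p
    (dist y p = Metric.infDist y K ∧
        ∀ q ∈ K, dist y q = Metric.infDist y K → q = p) ∧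
      Metric.infDist y K = θ * Metric.infDist x K ∧
      (Metric.infDist y K)⁻¹ • (y - p) = (Metric.infDist x K)⁻¹ • (x - p) := by
  intro y
  set d := Metric.infDist x K with hd
  have hd0 : 0 < d := by
    rw [← hp]
    exact dist_pos.mpr (fun h => hx (h ▸ hpK))
  have hyp : y - p = θ • (x - p) := by
    simp only [y, smul_sub]
    module
  have hdyp : dist y p = θ * d := by
    rw [dist_eq_norm, hyp, norm_smul, Real.norm_eq_abs, abs_of_pos hθ0, ← dist_eq_norm, hp]
  have hxy : dist x y = (1 - θ) * d := by
    have : x - y = (1 - θ) • (x - p) := by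
      simp only [y, smul_sub]
      module
    rw [dist_eq_norm, this, norm_smul, Real.norm_eq_abs, abs_of_nonneg (by linarith),
      ← dist_eq_norm, hp]
  have hlow : ∀ q ∈ K, θ * d ≤ dist y q := by
    intro q hq
    have h1 : d ≤ dist x q := Metric.infDist_le_dist_of_mem hq
    have h2 : dist x q ≤ dist x y + dist y q := dist_triangle x y q
    nlinarith [dist_nonneg (x := y) (y := q)]
  have hinf : Metric.infDist y K = θ * d := by
    refine le_antisymm (hdyp ▸ Metric.infDist_le_dist_of_mem hpK) ?_
    by_contra h
    obtain ⟨q, hq, hlt⟩ := (Metric.infDist_lt_iff hKne).mp (lt_of_not_ge h)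
    exact absurd (hlow q hq) (not_le.mpr hlt)
  refine ⟨⟨by rw [hdyp, hinf], ?_⟩, hinf, ?_⟩
  · intro q hq hdq
    apply hpu q hq
    have h2 : dist x q ≤ dist x y + dist y q := dist_triangle x y q
    have h1 : d ≤ dist x q := Metric.infDist_le_dist_of_mem hq
    rw [hdq, hinf] at h2
    nlinarith
  · rw [hinf, hyp, smul_smul, show (θ * d)⁻¹ * θ = d⁻¹ by field_simp]
end
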